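/- For a sequence of n ≥ 3 i.i.d. Bernoulli(p) trials with 0 < p < 1 and 1 ≤ k < n/2, the expected value of D̂_k(X) = P̂_k(X) − (1 − Q̂_k(X)), conditional on both I_k(X) and J_k(X) being nonempty, is strictly negative. -/
import Mathlib

open Finset

/-- Probability weight of a Bernoulli(p) binary sequence. -/
def wgt {n : ℕ} (p : ℝ) (x : Fin n → Bool) : ℝ :=
  ∏ i, if x i then p else 1 - p

/-- The set of trials that immediately follow `k` consecutive successes. -/
def streakSet {n : ℕ} (k : ℕ) (x : Fin n → Bool) : Finset (Fin n) :=
  Finset.univ.filter (fun i : Fin n =>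
    k ≤ i.val ∧ ∀ j : Fin n, i.val - k ≤ j.val → j.val < i.val → x j = true)

/-- The proportion of successes on the trials that immediately follow `k`
consecutive successes. -/
noncomputable def phat {n : ℕ} (k : ℕ) (x : Fin n → Bool) : ℝ :=
  (∑ i ∈ streakSet k x, if x i then (1:ℝ) else 0) / ((streakSet k x).card : ℝ)

/-- Number of successes in the sequence. -/
def ones {n : ℕ} (x : Fin n → Bool) : ℕ :=
  (Finset.univ.filter (fun i => x i = true)).card

section Aux

variable {n : ℕ}

lemma wgt_pos {p : ℝ} (hp : 0 < p) (hp1 : p < 1) (x : Fin n → Bool) : 0 < wgt p x := by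
  refine Finset.prod_pos fun i _ => ?_
  by_cases h : x i <;> simp [h] <;> linarith

lemma streak_mono {k : ℕ} {x y : Fin n → Bool} (h : ∀ i, x i = true → y i = true) :
    streakSet k x ⊆ streakSet k y := by
  intro i hi
  simp only [streakSet, mem_filter, mem_univ, true_and] at hi ⊢
  exact ⟨hi.1, fun j hj1 hj2 => h _ (hi.2 j hj1 hj2)⟩

lemma mem_streak_update {k : ℕ} {x : Fin n → Bool} {t : Fin n} {b : Bool} :
    t ∈ streakSet k (Function.update x t b) ↔ t ∈ streakSet k x := by
  simp only [streakSet, mem_filter, mem_univ, true_and]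
  constructor <;> rintro ⟨h1, h2⟩ <;> refine ⟨h1, fun j hj1 hj2 => ?_⟩
  · have := h2 j hj1 hj2
    rwa [Function.update_of_ne (by exact fun hjt => absurd (hjt ▸ hj2) (lt_irrefl _)) ] at this
  · have hne : j ≠ t := fun hjt => absurd (hjt ▸ hj2) (lt_irrefl _)
    rw [Function.update_of_ne hne]
    exact h2 j hj1 hj2

lemma wgt_update_true {p : ℝ} {x : Fin n → Bool} {t : Fin n} (h : x t = false) :
    wgt p (Function.update x t true) * (1 - p) = wgt p x * p := by
  have key : ∀ b : Bool, wgt p (Function.update x t b) =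
      (if b then p else 1 - p) * ∏ i ∈ univ.erase t, (if x i then p else 1 - p) := by
    intro b
    rw [wgt, ← Finset.mul_prod_erase univ _ (mem_univ t), Function.update_self]
    congr 1
    exact Finset.prod_congr rfl fun i hi =>
      by rw [Function.update_of_ne (Finset.ne_of_mem_erase hi)]
  have hx : Function.update x t false = x := by
    rw [← h]; exact Function.update_eq_self t x
  calc wgt p (Function.update x t true) * (1 - p)
      = (p * ∏ i ∈ univ.erase t, (if x i then p else 1 - p)) * (1-p) := by rw [key true]; simp
    _ = ((if (false:Bool) then p else 1-p) * ∏ i ∈ univ.erase t, (if x i then p else 1 - p)) * p := by simp only [Bool.false_eq_true, if_false]; ring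
    _ = wgt p x * p := by rw [← key false, hx]

end Aux

section Main

variable {n : ℕ}

/-- Splitting a sum over all boolean sequences into pairs differing at position `t`. -/
lemma pair_split (t : Fin n) (G : (Fin n → Bool) → ℝ) :
    ∑ x : Fin n → Bool, G x =
      ∑ x ∈ univ.filter (fun x : Fin n → Bool => x t = false),
        (G x + G (Function.update x t true)) := by
  rw [Finset.sum_add_distrib]
  rw [← Finset.sum_filter_add_sum_filter_not univ (fun x : Fin n → Bool => x t = false) G]
  congr 1
  refine Finset.sum_bij' (fun a _ => Function.update a t false)
    (fun a _ => Function.update a t true) ?_ ?_ ?_ ?_ ?_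
  · intro a ha
    simp only [mem_filter, mem_univ, true_and]
    simp [Function.update_self]
  · intro a ha
    simp only [mem_filter, mem_univ, true_and]
    simp [Function.update_self]
  · intro a ha
    simp only [mem_filter, mem_univ, true_and] at ha
    have ha' : a t = true := by revert ha; cases h : a t <;> simp
    simp only [Function.update_idem]
    rw [show (true : Bool) = a t from ha'.symm]
    exact Function.update_eq_self t a
  · intro a ha
    simp only [mem_filter, mem_univ, true_and] at ha
    simp only [Function.update_idem]
    rw [show (false : Bool) = a t from ha.symm]
    exact Function.update_eq_self t a
  · intro a ha
    simp only [mem_filter, mem_univ, true_and] at ha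
    have ha' : a t = true := by revert ha; cases h : a t <;> simp
    congr 1
    simp only [Function.update_idem]
    rw [show (true : Bool) = a t from ha'.symm]
    exact (Function.update_eq_self t a).symm


/-- The conditioning event: both streak sets nonempty. -/
def Ev {n : ℕ} (k : ℕ) (x : Fin n → Bool) : Prop :=
  (streakSet k x).Nonempty ∧ (streakSet k (fun i => !x i)).Nonempty

instance {k : ℕ} (x : Fin n → Bool) : Decidable (Ev k x) := by unfold Ev; infer_instance

/-- The summand in the split form of lemma A. -/
noncomputable def g {n : ℕ} (k : ℕ) (p : ℝ) (x : Fin n → Bool) (t : Fin n) : ℝ :=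
  if Ev k x ∧ t ∈ streakSet k x then
    wgt p x * ((if x t then (1:ℝ) else 0) - p) / ((streakSet k x).card : ℝ)
  else 0

lemma pair_le {k : ℕ} {p : ℝ} (hp : 0 < p) (hp1 : p < 1) (t : Fin n)
    {x₀ : Fin n → Bool} (h0 : x₀ t = false) :
    g k p x₀ t + g k p (Function.update x₀ t true) t ≤ 0 := by
  set x₁ := Function.update x₀ t true with hx₁
  by_cases htI : t ∈ streakSet k x₀
  · -- t in both streak sets
    have htI1 : t ∈ streakSet k x₁ := mem_streak_update.mpr htI
    have hsub : streakSet k x₀ ⊆ streakSet k x₁ := by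
      refine streak_mono fun i hi => ?_
      by_cases hit : i = t
      · subst hit; simp [hx₁, Function.update_self]
      · rwa [hx₁, Function.update_of_ne hit]
    have ha0pos : (0:ℝ) < ((streakSet k x₀).card : ℝ) := by
      exact_mod_cast Finset.card_pos.mpr ⟨t, htI⟩
    have ha1pos : (0:ℝ) < ((streakSet k x₁).card : ℝ) := by
      exact_mod_cast Finset.card_pos.mpr ⟨t, htI1⟩
    have hcard : ((streakSet k x₀).card : ℝ) ≤ ((streakSet k x₁).card : ℝ) := by
      exact_mod_cast Finset.card_le_card hsub
    have hw0 : 0 < wgt p x₀ := wgt_pos hp hp1 x₀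
    have hkey : wgt p x₁ * (1 - p) = wgt p x₀ * p := wgt_update_true h0
    have hg0 : g k p x₀ t = if Ev k x₀ then -(wgt p x₀ * p / ((streakSet k x₀).card : ℝ)) else 0 := by
      simp only [g, h0, htI, and_true]
      split <;> [skip; rfl]
      simp only [Bool.false_eq_true, if_false]
      ring
    by_cases hE1 : Ev k x₁
    · -- then Ev x₀ too
      have hE0 : Ev k x₀ := by
        refine ⟨⟨t, htI⟩, hE1.2.mono (streak_mono fun i hi => ?_)⟩
        by_cases hit : i = t
        · subst hit; simp [hx₁, Function.update_self] at hi
        · rwa [hx₁, Function.update_of_ne hit] at hi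
      have hg1 : g k p x₁ t = wgt p x₁ * (1 - p) / ((streakSet k x₁).card : ℝ) := by
        have hx1t : x₁ t = true := Function.update_self t true x₀
        simp only [g, hE1, htI1, and_self, if_true, hx1t]
      rw [hg0, if_pos hE0, hg1]
      have h1 : wgt p x₁ * (1 - p) / ((streakSet k x₁).card : ℝ)
          ≤ wgt p x₀ * p / ((streakSet k x₀).card : ℝ) := by
        rw [hkey]
        apply div_le_div_of_nonneg_left (by positivity) ha0pos hcard
      linarith
    · have hg1 : g k p x₁ t = 0 := by simp only [g, hE1, false_and, if_false]
      rw [hg0, hg1]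
      split
      · have : 0 < wgt p x₀ * p / ((streakSet k x₀).card : ℝ) := by positivity
        linarith
      · simp
  · have htI1 : t ∉ streakSet k x₁ := fun h => htI (mem_streak_update.mp h)
    simp only [g, htI, htI1, and_false, if_false, add_zero, le_refl]

lemma pair_lt {k : ℕ} {p : ℝ} (hp : 0 < p) (hp1 : p < 1) (t : Fin n)
    {x₀ : Fin n → Bool} (h0 : x₀ t = false) (htI : t ∈ streakSet k x₀) (hE0 : Ev k x₀)
    (hcard : (streakSet k x₀).card < (streakSet k (Function.update x₀ t true)).card) :
    g k p x₀ t + g k p (Function.update x₀ t true) t < 0 := by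
  set x₁ := Function.update x₀ t true with hx₁
  have htI1 : t ∈ streakSet k x₁ := mem_streak_update.mpr htI
  have ha0pos : (0:ℝ) < ((streakSet k x₀).card : ℝ) := by
    exact_mod_cast Finset.card_pos.mpr ⟨t, htI⟩
  have ha1pos : (0:ℝ) < ((streakSet k x₁).card : ℝ) := by
    exact_mod_cast Finset.card_pos.mpr ⟨t, htI1⟩
  have hcard' : ((streakSet k x₀).card : ℝ) < ((streakSet k x₁).card : ℝ) := by
    exact_mod_cast hcard
  have hw0 : 0 < wgt p x₀ := wgt_pos hp hp1 x₀
  have hkey : wgt p x₁ * (1 - p) = wgt p x₀ * p := wgt_update_true h0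
  have hg0 : g k p x₀ t = -(wgt p x₀ * p / ((streakSet k x₀).card : ℝ)) := by
    simp only [g, h0, htI, and_true, hE0, if_true]
    simp only [Bool.false_eq_true, if_false]
    ring
  by_cases hE1 : Ev k x₁
  · have hg1 : g k p x₁ t = wgt p x₁ * (1 - p) / ((streakSet k x₁).card : ℝ) := by
      have hx1t : x₁ t = true := Function.update_self t true x₀
      simp only [g, hE1, htI1, and_self, if_true, hx1t]
    rw [hg0, hg1]
    have h1 : wgt p x₁ * (1 - p) / ((streakSet k x₁).card : ℝ)
        < wgt p x₀ * p / ((streakSet k x₀).card : ℝ) := by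
      rw [hkey]
      apply div_lt_div_of_pos_left (by positivity) ha0pos hcard'
    linarith
  · have hg1 : g k p x₁ t = 0 := by simp only [g, hE1, false_and, if_false]
    rw [hg0, hg1]
    have : 0 < wgt p x₀ * p / ((streakSet k x₀).card : ℝ) := by positivity
    linarith

section Witness

variable {k : ℕ} (hk : 1 ≤ k) (hk2 : 2 * k < n)

/-- the witness sequence: k ones then zeros -/
def w0 (n k : ℕ) : Fin n → Bool := fun i => decide (i.val < k)

lemma hkn (hk : 1 ≤ k) (hk2 : 2 * k < n) : k < n := by omega

include hk hk2

lemma w0_t0 : w0 n k ⟨k, hkn hk hk2⟩ = false := by simp [w0]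

lemma w0_mem : (⟨k, hkn hk hk2⟩ : Fin n) ∈ streakSet k (w0 n k) := by
  simp only [streakSet, mem_filter, mem_univ, true_and]
  exact ⟨le_refl k, fun j _ hj2 => by simp [w0, hj2]⟩

lemma w0_Ev : Ev k (w0 n k) := by
  refine ⟨⟨_, w0_mem hk hk2⟩, ⟨⟨2*k, hk2⟩, ?_⟩⟩
  simp only [streakSet, mem_filter, mem_univ, true_and]
  refine ⟨by omega, fun j hj1 hj2 => ?_⟩
  have : ¬ (j.val < k) := by omega
  simp [w0, this]

lemma w0_card :
    (streakSet k (w0 n k)).card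
      < (streakSet k (Function.update (w0 n k) ⟨k, hkn hk hk2⟩ true)).card := by
  set t₀ : Fin n := ⟨k, hkn hk hk2⟩
  apply Finset.card_lt_card
  constructor
  · refine streak_mono fun i hi => ?_
    by_cases hit : i = t₀
    · subst hit; simp [Function.update_self]
    · rwa [Function.update_of_ne hit]
  · intro hsub
    have hk1n : k + 1 < n := by omega
    have ht1 : (⟨k+1, hk1n⟩ : Fin n) ∈ streakSet k (Function.update (w0 n k) t₀ true) := by
      simp only [streakSet, mem_filter, mem_univ, true_and]
      refine ⟨by omega, fun j hj1 hj2 => ?_⟩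
      by_cases hjt : j = t₀
      · subst hjt; simp [Function.update_self]
      · have hjk : j.val < k := by
          rcases Nat.lt_or_ge j.val k with h | h
          · exact h
          · exfalso; exact hjt (Fin.ext (show j.val = k by omega))
        rw [Function.update_of_ne hjt]
        simp [w0, hjk]
    have ht1' := hsub ht1
    simp only [streakSet, mem_filter, mem_univ, true_and] at ht1'
    have := ht1'.2 t₀ (by show k+1-k ≤ k; omega) (by show k < k+1; omega)
    rw [w0_t0 hk hk2] at this
    exact Bool.false_ne_true this

end Witness

lemma sum_g_eq {k : ℕ} {p : ℝ} (x : Fin n → Bool) :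
    (if Ev k x then wgt p x * (phat k x - p) else 0) = ∑ t, g k p x t := by
  by_cases hE : Ev k x
  · rw [if_pos hE]
    have hcardn : (streakSet k x).card ≠ 0 := Finset.card_ne_zero.mpr hE.1
    have hcard : ((streakSet k x).card : ℝ) ≠ 0 := Nat.cast_ne_zero.mpr hcardn
    have h1 : (∑ t, g k p x t) =
        ∑ t ∈ streakSet k x,
          wgt p x * ((if x t then (1:ℝ) else 0) - p) / ((streakSet k x).card : ℝ) := by
      have h2 : (∑ t, g k p x t) = ∑ t : Fin n, (if t ∈ streakSet k x then
          wgt p x * ((if x t then (1:ℝ) else 0) - p) / ((streakSet k x).card : ℝ) else 0) :=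
        Finset.sum_congr rfl fun t _ => by simp only [g, hE, true_and]
      rw [h2, Finset.sum_ite_mem, Finset.univ_inter]
    rw [h1, ← Finset.sum_div, ← Finset.mul_sum, Finset.sum_sub_distrib, Finset.sum_const,
      nsmul_eq_mul]
    rw [phat]
    field_simp
  · rw [if_neg hE]
    rw [eq_comm, Finset.sum_eq_zero]
    intro t _
    simp only [g, hE, false_and, if_false]

lemma sumA (hk : 1 ≤ k) (hk2 : 2 * k < n) {p : ℝ} (hp : 0 < p) (hp1 : p < 1) :
    ∑ x : Fin n → Bool, (if Ev k x then wgt p x * (phat k x - p) else 0) < 0 := by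
  have h1 : ∑ x : Fin n → Bool, (if Ev k x then wgt p x * (phat k x - p) else 0)
      = ∑ t : Fin n, ∑ x : Fin n → Bool, g k p x t := by
    rw [← Finset.sum_comm]
    exact Finset.sum_congr rfl fun x _ => sum_g_eq x
  rw [h1]
  have key : ∀ t : Fin n, ∑ x : Fin n → Bool, g k p x t
      = ∑ x ∈ univ.filter (fun x : Fin n → Bool => x t = false),
          (g k p x t + g k p (Function.update x t true) t) :=
    fun t => pair_split t (fun x => g k p x t)
  have hle : ∀ t : Fin n, ∑ x : Fin n → Bool, g k p x t ≤ 0 := by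
    intro t
    rw [key t]
    refine Finset.sum_nonpos fun x hx => ?_
    simp only [mem_filter, mem_univ, true_and] at hx
    exact pair_le hp hp1 t hx
  have hlt : ∑ x : Fin n → Bool, g k p x (⟨k, hkn hk hk2⟩ : Fin n) < 0 := by
    set t₀ : Fin n := ⟨k, hkn hk hk2⟩
    rw [key t₀]
    have := Finset.sum_lt_sum (s := univ.filter (fun x : Fin n → Bool => x t₀ = false))
      (f := fun x => g k p x t₀ + g k p (Function.update x t₀ true) t₀)
      (g := fun _ => (0:ℝ))
      (fun x hx => by
        simp only [mem_filter, mem_univ, true_and] at hx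
        exact pair_le hp hp1 t₀ hx)
      ⟨w0 n k, by
        simp only [mem_filter, mem_univ, true_and]
        exact w0_t0 hk hk2,
        pair_lt hp hp1 t₀ (w0_t0 hk hk2) (w0_mem hk hk2) (w0_Ev hk hk2) (w0_card hk hk2)⟩
    simpa using this
  calc ∑ t : Fin n, ∑ x : Fin n → Bool, g k p x t
      < ∑ _t : Fin n, (0:ℝ) :=
        Finset.sum_lt_sum (fun t _ => hle t) ⟨⟨k, hkn hk hk2⟩, Finset.mem_univ _, hlt⟩
    _ = 0 := by simp

lemma wgt_compl {p : ℝ} (x : Fin n → Bool) : wgt p (fun i => !x i) = wgt (1-p) x := by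
  unfold wgt
  refine Finset.prod_congr rfl fun i _ => ?_
  cases h : x i <;> simp [h]

lemma bnot_bnot (x : Fin n → Bool) : (fun i => !(!x i)) = x := by
  funext i; simp

lemma Ev_compl {k : ℕ} (x : Fin n → Bool) : Ev k (fun i => !x i) ↔ Ev k x := by
  unfold Ev
  rw [show (fun i => !(fun i => !x i) i) = x from bnot_bnot x]
  exact and_comm

lemma sumB (hk : 1 ≤ k) (hk2 : 2 * k < n) {p : ℝ} (hp : 0 < p) (hp1 : p < 1) :
    ∑ x : Fin n → Bool,
      (if Ev k x then wgt p x * (phat k (fun i => !x i) - (1-p)) else 0) < 0 := by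
  have h : ∑ x : Fin n → Bool, (if Ev k x then wgt (1-p) x * (phat k x - (1-p)) else 0)
      = ∑ x : Fin n → Bool,
        (if Ev k x then wgt p x * (phat k (fun i => !x i) - (1-p)) else 0) := by
    apply Fintype.sum_equiv
      (Function.Involutive.toPerm (fun x => fun i => !x i) (fun x => bnot_bnot x))
    intro x
    show (if Ev k x then wgt (1-p) x * (phat k x - (1-p)) else 0)
        = (if Ev k (fun i => !x i) then
            wgt p (fun i => !x i) * (phat k (fun i => !(!x i)) - (1-p)) else 0)
    rw [bnot_bnot, wgt_compl]
    exact (if_congr (Ev_compl x) rfl rfl).symm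
  rw [← h]
  exact sumA hk hk2 (by linarith) (by linarith)

end Main

/-- The expected difference in proportions following k hits versus k misses,
conditional on both being defined, is strictly negative. -/
theorem stmt7 (n k : ℕ) (hn : 3 ≤ n) (hk : 1 ≤ k) (hk2 : 2 * k < n)
    (p : ℝ) (hp : 0 < p) (hp1 : p < 1) :
    (∑ x : Fin n → Bool,
        if (streakSet k x).Nonempty ∧ (streakSet k (fun i => !x i)).Nonempty then
          wgt p x * (phat k x - (1 - phat k (fun i => !x i))) else 0) /
    (∑ x : Fin n → Bool,
        if (streakSet k x).Nonempty ∧ (streakSet k (fun i => !x i)).Nonempty then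
          wgt p x else 0)
      < 0 := by
  have hnum : (∑ x : Fin n → Bool,
      if (streakSet k x).Nonempty ∧ (streakSet k (fun i => !x i)).Nonempty then
        wgt p x * (phat k x - (1 - phat k (fun i => !x i))) else 0) < 0 := by
    have h1 : (∑ x : Fin n → Bool,
        if (streakSet k x).Nonempty ∧ (streakSet k (fun i => !x i)).Nonempty then
          wgt p x * (phat k x - (1 - phat k (fun i => !x i))) else 0)
        = (∑ x : Fin n → Bool, if Ev k x then wgt p x * (phat k x - p) else 0)
          + (∑ x : Fin n → Bool,
              if Ev k x then wgt p x * (phat k (fun i => !x i) - (1-p)) else 0) := by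
      rw [← Finset.sum_add_distrib]
      refine Finset.sum_congr rfl fun x _ => ?_
      by_cases hE : Ev k x
      · rw [if_pos hE, if_pos hE, if_pos (show (streakSet k x).Nonempty ∧
          (streakSet k (fun i => !x i)).Nonempty from hE)]
        ring
      · rw [if_neg hE, if_neg hE, if_neg (show ¬((streakSet k x).Nonempty ∧
          (streakSet k (fun i => !x i)).Nonempty) from hE)]
        simp
    rw [h1]
    have hA := sumA (n := n) (k := k) hk hk2 hp hp1
    have hB := sumB (n := n) (k := k) hk hk2 hp hp1
    linarith
  have hden : (0:ℝ) < ∑ x : Fin n → Bool,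
      if (streakSet k x).Nonempty ∧ (streakSet k (fun i => !x i)).Nonempty then
        wgt p x else 0 := by
    refine Finset.sum_pos' (fun x _ => ?_) ⟨w0 n k, Finset.mem_univ _, ?_⟩
    · split
      · exact (wgt_pos hp hp1 x).le
      · exact le_refl 0
    · rw [if_pos (show (streakSet k (w0 n k)).Nonempty ∧
        (streakSet k (fun i => !(w0 n k) i)).Nonempty from w0_Ev hk hk2)]
      exact wgt_pos hp hp1 _
  exact div_neg_of_neg_of_pos hnum hden
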